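/- arXiv:2502.20474 — 8 statements merged into one kernel-verified Lean document; each statement's English description precedes it below -/
import Mathlib

section
/- Let C be a pointed category with binary products satisfying: for every object X and every morphism f : X × X → Y, f ∘ (1_X, 0) = 0 implies f ∘ (1_X, 1_X) = f ∘ (0, 1_X). Then for all objects A, B, C', X, all morphisms f : A × B → C', a : X → A, b : X → B, if f ∘ (a, 0) = 0 then f ∘ (a, b) = f ∘ (0, b). -/
open CategoryTheory Limits

/-- If every `f : X ⨯ X ⟶ Y` with `(1_X,0) ≫ f = 0` satisfies
`(1_X,1_X) ≫ f = (0,1_X) ≫ f`, then for all `f : A ⨯ B ⟶ C'`, `a : X ⟶ A`,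
`b : X ⟶ B`, `(a,0) ≫ f = 0` implies `(a,b) ≫ f = (0,b) ≫ f`. -/
theorem stmt4 {C : Type*} [Category C] [HasZeroObject C] [HasZeroMorphisms C]
    [HasBinaryProducts C]
    (H : ∀ ⦃X Y : C⦄ (f : X ⨯ X ⟶ Y),
      prod.lift (𝟙 X) (0 : X ⟶ X) ≫ f = 0 →
        prod.lift (𝟙 X) (𝟙 X) ≫ f = prod.lift (0 : X ⟶ X) (𝟙 X) ≫ f) :
    ∀ ⦃A B C' X : C⦄ (f : A ⨯ B ⟶ C') (a : X ⟶ A) (b : X ⟶ B),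
      prod.lift a (0 : X ⟶ B) ≫ f = 0 →
        prod.lift a b ≫ f = prod.lift (0 : X ⟶ A) b ≫ f := by
  intro A B C' X f a b h
  have key := H (prod.map a b ≫ f) (by
    rw [← Category.assoc, prod.lift_map]
    simpa using h)
  rw [← Category.assoc, ← Category.assoc, prod.lift_map, prod.lift_map] at key
  simpa using key
end

section
/- Let C be a pointed category with binary products satisfying: for all objects A, B, C', all f : A × B → C', a : X → A, b : X → B, if f ∘ (a, 0) = 0 then f ∘ (a, b) = f ∘ (0, b). Then C has normal projections: for all objects A, B, the projection π₂ : A × B → B is a cokernel of ι₁ = (1_A, 0) : A → A × B. -/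
open CategoryTheory Limits

def IsCokernelOf {C : Type*} [Category C] [HasZeroMorphisms C]
    {A B Q : C} (m : A ⟶ B) (q : B ⟶ Q) : Prop :=
  m ≫ q = 0 ∧ ∀ ⦃T : C⦄ (f : B ⟶ T), m ≫ f = 0 → ∃! u : Q ⟶ T, f = q ≫ u

section

variable {C : Type*} [Category C] [HasZeroMorphisms C]

theorem isCokernelOf_of_section {A B Q : C} {m : A ⟶ B} {q : B ⟶ Q} (s : Q ⟶ B)
    (hmq : m ≫ q = 0) (hsq : s ≫ q = 𝟙 Q)
    (hfactor : ∀ ⦃T : C⦄ (f : B ⟶ T), m ≫ f = 0 → f = q ≫ s ≫ f) :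
    IsCokernelOf m q := by
  refine ⟨hmq, fun T f hf => ⟨s ≫ f, hfactor f hf, fun u hu => ?_⟩⟩
  rw [hu, ← Category.assoc, hsq, Category.id_comp]

variable [HasBinaryProducts C]

theorem eq_snd_comp_of_lift_id_zero_comp_eq_zero
    (H : ∀ ⦃A B C' X : C⦄ (f : A ⨯ B ⟶ C') (a : X ⟶ A) (b : X ⟶ B),
      prod.lift a (0 : X ⟶ B) ≫ f = 0 →
        prod.lift a b ≫ f = prod.lift (0 : X ⟶ A) b ≫ f)
    {A B T : C} (f : A ⨯ B ⟶ T) (hf : prod.lift (𝟙 A) (0 : A ⟶ B) ≫ f = 0) :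
    f = prod.snd ≫ prod.lift (0 : B ⟶ A) (𝟙 B) ≫ f := by
  have hfst : prod.lift (prod.fst : A ⨯ B ⟶ A) (0 : A ⨯ B ⟶ B) ≫ f = 0 := by
    rw [show prod.lift prod.fst 0 = prod.fst ≫ prod.lift (𝟙 A) 0 by simp, Category.assoc, hf,
      comp_zero]
  -- `H` at `a = π₁`, `b = π₂`: here `(π₁, π₂) = 𝟙` and `(0, π₂) = π₂ ≫ (0, 𝟙)`.
  rw [← Category.assoc, prod.comp_lift]
  simpa using H f prod.fst prod.snd hfst

end

theorem stmt5_general {C : Type*} [Category C] [HasZeroMorphisms C]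
    [HasBinaryProducts C]
    (H : ∀ ⦃A B C' X : C⦄ (f : A ⨯ B ⟶ C') (a : X ⟶ A) (b : X ⟶ B),
      prod.lift a (0 : X ⟶ B) ≫ f = 0 →
        prod.lift a b ≫ f = prod.lift (0 : X ⟶ A) b ≫ f) :
    ∀ A B : C, IsCokernelOf (prod.lift (𝟙 A) (0 : A ⟶ B)) (prod.snd : A ⨯ B ⟶ B) :=
  fun _ _ => isCokernelOf_of_section (prod.lift 0 (𝟙 _)) (prod.lift_snd _ _)
    (prod.lift_snd _ _) fun _ f hf => eq_snd_comp_of_lift_id_zero_comp_eq_zero H f hf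

/-- If for all `f : A ⨯ B ⟶ C'`, `a : X ⟶ A`, `b : X ⟶ B`, `(a,0) ≫ f = 0` implies
`(a,b) ≫ f = (0,b) ≫ f`, then every projection `π₂ : A ⨯ B ⟶ B` is a cokernel of
`ι₁ = (1_A, 0)`. -/
theorem stmt5 {C : Type*} [Category C] [HasZeroObject C] [HasZeroMorphisms C]
    [HasBinaryProducts C]
    (H : ∀ ⦃A B C' X : C⦄ (f : A ⨯ B ⟶ C') (a : X ⟶ A) (b : X ⟶ B),
      prod.lift a (0 : X ⟶ B) ≫ f = 0 →
        prod.lift a b ≫ f = prod.lift (0 : X ⟶ A) b ≫ f) :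
    ∀ A B : C, IsCokernelOf (prod.lift (𝟙 A) (0 : A ⟶ B)) (prod.snd : A ⨯ B ⟶ B) :=
  stmt5_general H
end

section
/- For a pointed category C with binary products, the following are equivalent: (a) for all A, B, the projection π₂ : A × B → B is a cokernel of (1_A, 0) : A → A × B; (b) for all X, the projection π₂ : X × X → X is a cokernel of (1_X, 0) : X → X × X; (c) for all f : X × X → Y, f ∘ (1_X, 0) = 0 implies f ∘ (1_X, 1_X) = f ∘ (0, 1_X); (d) for all f : A × B → C', a : U → A, b : U → B, f ∘ (a, 0) = 0 implies f ∘ (a, b) = f ∘ (0, b); (e) for all f : X × X → Y and x : U → X, f ∘ (x, 0) = 0 implies f ∘ (x, x) = f ∘ (0, x). -/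
open CategoryTheory Limits

/-- For a pointed category with binary products, the five conditions of Theorem 1.2
are equivalent. -/
theorem stmt6 {C : Type*} [Category C] [HasZeroObject C] [HasZeroMorphisms C]
    [HasBinaryProducts C] :
    List.TFAE
      [ -- (a) every projection is a cokernel of the first inclusion
        ∀ A B : C, IsCokernelOf (prod.lift (𝟙 A) (0 : A ⟶ B)) (prod.snd : A ⨯ B ⟶ B),
        -- (b) the diagonal case
        ∀ X : C, IsCokernelOf (prod.lift (𝟙 X) (0 : X ⟶ X)) (prod.snd : X ⨯ X ⟶ X),
        -- (c)
        ∀ ⦃X Y : C⦄ (f : X ⨯ X ⟶ Y),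
          prod.lift (𝟙 X) (0 : X ⟶ X) ≫ f = 0 →
            prod.lift (𝟙 X) (𝟙 X) ≫ f = prod.lift (0 : X ⟶ X) (𝟙 X) ≫ f,
        -- (d)
        ∀ ⦃A B C' U : C⦄ (f : A ⨯ B ⟶ C') (a : U ⟶ A) (b : U ⟶ B),
          prod.lift a (0 : U ⟶ B) ≫ f = 0 →
            prod.lift a b ≫ f = prod.lift (0 : U ⟶ A) b ≫ f,
        -- (e)
        ∀ ⦃X Y U : C⦄ (f : X ⨯ X ⟶ Y) (x : U ⟶ X),
          prod.lift x (0 : U ⟶ X) ≫ f = 0 →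
            prod.lift x x ≫ f = prod.lift (0 : U ⟶ X) x ≫ f ] := by
  tfae_have 1 → 2 := fun h X => h X X
  tfae_have 2 → 3 := by
    intro h X Y f hf
    obtain ⟨u, hu, -⟩ := (h X).2 f hf
    rw [hu, ← Category.assoc, ← Category.assoc, prod.lift_snd, prod.lift_snd]
  tfae_have 3 → 4 := by
    intro h A B C' U f a b hf
    have h1 : prod.lift (𝟙 U) (0 : U ⟶ U) ≫ prod.map a b ≫ f = 0 := by
      rw [← Category.assoc, prod.lift_map]
      simpa using hf
    have := h (prod.map a b ≫ f) h1
    rw [← Category.assoc, ← Category.assoc, prod.lift_map, prod.lift_map] at this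
    simpa using this
  tfae_have 4 → 5 := fun h X Y U f x hf => h f x x hf
  tfae_have 5 → 3 := fun h X Y f hf => h f (𝟙 X) hf
  tfae_have 4 → 1 := by
    intro h A B
    constructor
    · rw [prod.lift_snd]
    · intro T f hf
      refine ⟨prod.lift (0 : B ⟶ A) (𝟙 B) ≫ f, ?_, ?_⟩
      · have h1 : prod.lift (prod.fst : A ⨯ B ⟶ A) (0 : A ⨯ B ⟶ B) ≫ f = 0 := by
          have : prod.lift (prod.fst : A ⨯ B ⟶ A) (0 : A ⨯ B ⟶ B)
              = prod.fst ≫ prod.lift (𝟙 A) (0 : A ⟶ B) := by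
            simp
          rw [this, Category.assoc, hf, comp_zero]
        calc f = prod.lift prod.fst prod.snd ≫ f := by simp
          _ = prod.lift 0 prod.snd ≫ f := h f prod.fst prod.snd h1
          _ = prod.snd ≫ prod.lift 0 (𝟙 B) ≫ f := by
              rw [← Category.assoc]; congr 1; simp
      · intro u hu
        rw [hu, ← Category.assoc, prod.lift_snd, Category.id_comp]
  tfae_finish
end

section
/- Let C be a pointed category with binary products having normal projections (equivalently, satisfying: for all f : A × B → C', a : U → A, b : U → B, f ∘ (a, 0) = 0 implies f ∘ (a, b) = f ∘ (0, b)). Let s : X × X → X be a subtraction on X, i.e., s ∘ (1_X, 1_X) = 0 and s ∘ (1_X, 0) = 1_X. Then s satisfies the law s(s(x,z), s(y,z)) = s(x,y); precisely, s ∘ (s ∘ (π₁, π₃), s ∘ (π₂, π₃)) = s ∘ (π₁, π₂) as morphisms X × X × X → X. -/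
open CategoryTheory Limits

/-- In a pointed category with binary products having normal projections (stated via
the equivalent elementwise condition), every subtraction `s` on `X` satisfies
`s(s(x,z), s(y,z)) = s(x,y)` for generalized elements `x, y, z : U ⟶ X`. -/
theorem stmt7 {C : Type*} [Category C] [HasZeroObject C] [HasZeroMorphisms C]
    [HasBinaryProducts C]
    (H : ∀ ⦃A B C' U : C⦄ (f : A ⨯ B ⟶ C') (a : U ⟶ A) (b : U ⟶ B),
      prod.lift a (0 : U ⟶ B) ≫ f = 0 →
        prod.lift a b ≫ f = prod.lift (0 : U ⟶ A) b ≫ f)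
    {X : C} (s : X ⨯ X ⟶ X)
    (h1 : prod.lift (𝟙 X) (𝟙 X) ≫ s = 0)
    (h2 : prod.lift (𝟙 X) (0 : X ⟶ X) ≫ s = 𝟙 X) :
    ∀ ⦃U : C⦄ (x y z : U ⟶ X),
      prod.lift (prod.lift x z ≫ s) (prod.lift y z ≫ s) ≫ s = prod.lift x y ≫ s := by
  intro U x y z
  -- f(z,(x,y)) = s(s(x,z), s(y,z))
  set F : X ⨯ X ⨯ X ⟶ X :=
    prod.lift (prod.lift (prod.snd ≫ prod.fst) prod.fst ≫ s)
      (prod.lift (prod.snd ≫ prod.snd) prod.fst ≫ s) ≫ s with hF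
  have diag : ∀ (w : U ⟶ X), prod.lift w w ≫ s = 0 := by
    intro w
    have : prod.lift w w = w ≫ prod.lift (𝟙 X) (𝟙 X) := by simp
    rw [this, Category.assoc, h1, comp_zero]
  have sub0 : ∀ (w : U ⟶ X), prod.lift w (0 : U ⟶ X) ≫ s = w := by
    intro w
    have : prod.lift w (0 : U ⟶ X) = w ≫ prod.lift (𝟙 X) (0 : X ⟶ X) := by simp
    rw [this, Category.assoc, h2, Category.comp_id]
  have hzero : prod.lift z (0 : U ⟶ X ⨯ X) ≫ F = 0 := by
    simp only [hF, prod.comp_lift_assoc, prod.lift_fst_assoc, prod.lift_snd_assoc,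
      prod.lift_fst, prod.lift_snd, zero_comp]
    exact diag _
  have key := H F z (prod.lift x y) hzero
  simp only [hF, prod.comp_lift_assoc, prod.lift_fst_assoc, prod.lift_snd_assoc,
    prod.lift_fst, prod.lift_snd, zero_comp] at key
  rw [sub0, sub0] at key
  exact key
end

section
/- Let C be a pointed category with binary products having normal projections. Let s : X × X → X and s' : X' × X' → X' be subtractions, and let g : X → X' be any morphism. Then g is homomorphic with respect to the subtractions: g ∘ s = s' ∘ (g × g), where g × g : X × X → X' × X' is the product morphism. -/
open CategoryTheory Limits

/-- In a pointed category with binary products having normal projections (stated via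
the equivalent elementwise condition), every morphism `g : X ⟶ X'` between objects
with subtractions `s`, `s'` is homomorphic: `s ≫ g = (g × g) ≫ s'`. -/
theorem stmt9 {C : Type*} [Category C] [HasZeroObject C] [HasZeroMorphisms C]
    [HasBinaryProducts C]
    (H : ∀ ⦃A B C' U : C⦄ (f : A ⨯ B ⟶ C') (a : U ⟶ A) (b : U ⟶ B),
      prod.lift a (0 : U ⟶ B) ≫ f = 0 →
        prod.lift a b ≫ f = prod.lift (0 : U ⟶ A) b ≫ f)
    {X X' : C} (s : X ⨯ X ⟶ X) (s' : X' ⨯ X' ⟶ X')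
    (hs1 : prod.lift (𝟙 X) (𝟙 X) ≫ s = 0)
    (hs2 : prod.lift (𝟙 X) (0 : X ⟶ X) ≫ s = 𝟙 X)
    (hs'1 : prod.lift (𝟙 X') (𝟙 X') ≫ s' = 0)
    (hs'2 : prod.lift (𝟙 X') (0 : X' ⟶ X') ≫ s' = 𝟙 X')
    (g : X ⟶ X') :
    s ≫ g = prod.map g g ≫ s' := by
  -- basic computation rules for s and s'
  have hz' : ∀ {U : C} (p : U ⟶ X'), prod.lift p (0 : U ⟶ X') ≫ s' = p := by
    intro U p
    have h : prod.lift p (0 : U ⟶ X') = p ≫ prod.lift (𝟙 X') 0 := by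
      rw [prod.comp_lift, Category.comp_id, comp_zero]
    rw [h, Category.assoc, hs'2, Category.comp_id]
  have hd' : ∀ {U : C} (p : U ⟶ X'), prod.lift p p ≫ s' = 0 := by
    intro U p
    have h : prod.lift p p = p ≫ prod.lift (𝟙 X') (𝟙 X') := by
      rw [prod.comp_lift, Category.comp_id]
    rw [h, Category.assoc, hs'1, comp_zero]
  have hz : ∀ {U : C} (p : U ⟶ X), prod.lift p (0 : U ⟶ X) ≫ s = p := by
    intro U p
    have h : prod.lift p (0 : U ⟶ X) = p ≫ prod.lift (𝟙 X) 0 := by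
      rw [prod.comp_lift, Category.comp_id, comp_zero]
    rw [h, Category.assoc, hs2, Category.comp_id]
  -- Identity A: s'(u, s'(u,v)) = s'(0, s'(0,v))
  have hA0 : prod.lift prod.fst (0 : X' ⨯ X' ⟶ X') ≫ (prod.lift prod.fst s' ≫ s') = 0 := by
    rw [← Category.assoc, prod.comp_lift, prod.lift_fst, hz', hd']
  have hA := H (prod.lift prod.fst s' ≫ s') prod.fst prod.snd hA0
  rw [prod.lift_fst_snd, Category.id_comp] at hA
  -- L1 : s'(0, s'(0, p)) = p
  have L1 : ∀ {U : C} (p : U ⟶ X'),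
      prod.lift (0 : U ⟶ X') (prod.lift (0 : U ⟶ X') p ≫ s') ≫ s' = p := by
    intro U p
    have h := congrArg (fun m => prod.lift p p ≫ m) hA
    simp only [← Category.assoc, prod.comp_lift, prod.lift_fst, prod.lift_snd,
      comp_zero] at h
    rw [hd' p, hz' p] at h
    exact h.symm
  -- Identity B: s'(s'(u,v), u) = s'(0, v)
  have hB0 : prod.lift prod.fst (0 : X' ⨯ X' ⟶ X') ≫ (prod.lift s' prod.fst ≫ s') = 0 := by
    rw [← Category.assoc, prod.comp_lift, prod.lift_fst, hz', hd']
  have hB := H (prod.lift s' prod.fst ≫ s') prod.fst prod.snd hB0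
  rw [prod.lift_fst_snd, Category.id_comp] at hB
  -- Cancellation: s'(p,q) = 0 → p = q
  have cancel : ∀ {U : C} (p q : U ⟶ X'), prod.lift p q ≫ s' = 0 → p = q := by
    intro U p q hpq
    have h := congrArg (fun m => prod.lift p q ≫ m) hB
    simp only [← Category.assoc, prod.comp_lift, prod.lift_fst, prod.lift_snd,
      comp_zero] at h
    rw [hpq] at h
    rw [hz'] at h
    -- h : prod.lift 0 p ≫ s' = prod.lift 0 q ≫ s'
    calc p = prod.lift (0 : U ⟶ X') (prod.lift (0 : U ⟶ X') p ≫ s') ≫ s' := (L1 p).symm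
      _ = prod.lift (0 : U ⟶ X') (prod.lift (0 : U ⟶ X') q ≫ s') ≫ s' := by rw [h]
      _ = q := L1 q
  -- the difference morphism D
  set D : X ⨯ X ⟶ X' := prod.lift (s ≫ g) (prod.map g g ≫ s') ≫ s' with hD
  have hD0 : prod.lift prod.fst (0 : X ⨯ X ⟶ X) ≫ D = 0 := by
    rw [hD, ← Category.assoc, prod.comp_lift, ← Category.assoc, hz,
      ← Category.assoc, prod.lift_map, zero_comp, hz', hd']
  have hDH := H D prod.fst prod.snd hD0
  rw [prod.lift_fst_snd, Category.id_comp] at hDH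
  -- evaluating at the diagonal gives prod.lift 0 (𝟙 X) ≫ D = 0
  have h1 : prod.lift (𝟙 X) (𝟙 X) ≫ D = 0 := by
    rw [hD, ← Category.assoc, prod.comp_lift, ← Category.assoc, hs1, zero_comp,
      ← Category.assoc, prod.lift_map]
    simp only [Category.id_comp]
    rw [hd' g, hd']
  have hdiagD : prod.lift (0 : X ⟶ X) (𝟙 X) ≫ D = 0 := by
    have h := congrArg (fun m => prod.lift (𝟙 X) (𝟙 X) ≫ m) hDH
    simp only [← Category.assoc, prod.comp_lift, comp_zero, prod.lift_snd] at h
    rw [h1] at h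
    exact h.symm
  have hDzero : D = 0 := by
    have h : prod.lift (0 : X ⨯ X ⟶ X) prod.snd =
        (prod.snd : X ⨯ X ⟶ X) ≫ prod.lift (0 : X ⟶ X) (𝟙 X) := by
      rw [prod.comp_lift, comp_zero, Category.comp_id]
    rw [hDH, h, Category.assoc, hdiagD, comp_zero]
  exact cancel _ _ hDzero
end

section
/- Let C be a pointed category with binary products having normal projections. Then any object X admits at most one subtraction: if s, s' : X × X → X both satisfy s(x,x) = 0 and s(x,0) = x (and likewise for s'), then s = s'. -/
open CategoryTheory Limits

/-!
If `t(z, (x, y)) = s'(s(x, z), s(y, z))`, then `t(z, (0, 0)) = s'(0, 0) = 0`, so by normality of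
the projection `t` factors through `(z, (x, y)) ↦ (x, y)`: it does not depend on `z`.
Taking `z = 0` gives `s'(x, y)`, taking `z = y` gives `s'(s(x, y), 0) = s(x, y)`.
-/

namespace CategoryTheory.Limits

variable {C : Type*} [Category C] [HasBinaryProducts C]

/-- `(z, (x, y)) ↦ s'(s(x, z), s(y, z))` -/
noncomputable def conjugateSubtraction {X : C} (s s' : X ⨯ X ⟶ X) : X ⨯ (X ⨯ X) ⟶ X :=
  prod.lift (prod.lift (prod.snd ≫ prod.fst) prod.fst ≫ s)
    (prod.lift (prod.snd ≫ prod.snd) prod.fst ≫ s) ≫ s'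

lemma lift_comp_conjugateSubtraction {X Y : C} (s s' : X ⨯ X ⟶ X) (z : Y ⟶ X)
    (w : Y ⟶ X ⨯ X) :
    prod.lift z w ≫ conjugateSubtraction s s' =
      prod.lift (prod.lift (w ≫ prod.fst) z ≫ s) (prod.lift (w ≫ prod.snd) z ≫ s) ≫ s' := by
  simp only [conjugateSubtraction, prod.comp_lift_assoc, prod.lift_snd_assoc, prod.lift_fst]

variable [HasZeroMorphisms C]

lemma lift_self_comp_eq_zero {X Y : C} {t : X ⨯ X ⟶ X}
    (ht : prod.lift (𝟙 X) (𝟙 X) ≫ t = 0) (g : Y ⟶ X) :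
    prod.lift g g ≫ t = 0 := by
  rw [← Category.comp_id g, ← prod.comp_lift, Category.assoc, ht, comp_zero]

lemma lift_zero_comp_eq_self {X Y : C} {t : X ⨯ X ⟶ X}
    (ht : prod.lift (𝟙 X) (0 : X ⟶ X) ≫ t = 𝟙 X) (g : Y ⟶ X) :
    prod.lift g (0 : Y ⟶ X) ≫ t = g := by
  rw [← Category.comp_id g, ← comp_zero (f := g), ← prod.comp_lift, Category.assoc, ht]

lemma lift_comp_eq_of_isCokernelOf_snd {A B T Y : C}
    (hsnd : IsCokernelOf (prod.lift (𝟙 A) (0 : A ⟶ B)) (prod.snd : A ⨯ B ⟶ B))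
    {f : A ⨯ B ⟶ T} (hf : prod.lift (𝟙 A) (0 : A ⟶ B) ≫ f = 0) (a a' : Y ⟶ A) (b : Y ⟶ B) :
    prod.lift a b ≫ f = prod.lift a' b ≫ f := by
  obtain ⟨u, rfl, -⟩ := hsnd.2 f hf
  simp only [prod.lift_snd_assoc]

end CategoryTheory.Limits

theorem stmt10_general {C : Type*} [Category C] [HasZeroMorphisms C]
    [HasBinaryProducts C]
    (H : ∀ A B : C, IsCokernelOf (prod.lift (𝟙 A) (0 : A ⟶ B)) (prod.snd : A ⨯ B ⟶ B))
    {X : C} (s s' : X ⨯ X ⟶ X)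
    (hs1 : prod.lift (𝟙 X) (𝟙 X) ≫ s = 0)
    (hs2 : prod.lift (𝟙 X) (0 : X ⟶ X) ≫ s = 𝟙 X)
    (hs'1 : prod.lift (𝟙 X) (𝟙 X) ≫ s' = 0)
    (hs'2 : prod.lift (𝟙 X) (0 : X ⟶ X) ≫ s' = 𝟙 X) :
    s = s' := by
  set t := conjugateSubtraction s s'
  have ht : prod.lift (𝟙 X) (0 : X ⟶ X ⨯ X) ≫ t = 0 := by
    simpa [t, lift_comp_conjugateSubtraction] using
      lift_self_comp_eq_zero hs'1 (prod.lift 0 (𝟙 X) ≫ s)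
  have h_at_snd : prod.lift prod.snd (𝟙 (X ⨯ X)) ≫ t = s := by
    simp only [t, lift_comp_conjugateSubtraction, Category.id_comp, prod.lift_fst_snd,
      lift_self_comp_eq_zero hs1, lift_zero_comp_eq_self hs'2]
  have h_at_zero : prod.lift 0 (𝟙 (X ⨯ X)) ≫ t = s' := by
    simp only [t, lift_comp_conjugateSubtraction, Category.id_comp, lift_zero_comp_eq_self hs2,
      prod.lift_fst_snd]
  rw [← h_at_snd, ← h_at_zero]
  exact lift_comp_eq_of_isCokernelOf_snd (H X (X ⨯ X)) ht _ _ _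

/-- In a pointed category with binary products having normal projections, any object
admits at most one subtraction. -/
theorem stmt10 {C : Type*} [Category C] [HasZeroObject C] [HasZeroMorphisms C]
    [HasBinaryProducts C]
    (H : ∀ A B : C, IsCokernelOf (prod.lift (𝟙 A) (0 : A ⟶ B)) (prod.snd : A ⨯ B ⟶ B))
    {X : C} (s s' : X ⨯ X ⟶ X)
    (hs1 : prod.lift (𝟙 X) (𝟙 X) ≫ s = 0)
    (hs2 : prod.lift (𝟙 X) (0 : X ⟶ X) ≫ s = 𝟙 X)
    (hs'1 : prod.lift (𝟙 X) (𝟙 X) ≫ s' = 0)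
    (hs'2 : prod.lift (𝟙 X) (0 : X ⟶ X) ≫ s' = 𝟙 X) :
    s = s' :=
  stmt10_general H s s' hs1 hs2 hs'1 hs'2
end

section
/- Let C be a pointed category with binary products having normal projections, and let s : X × X → X be a subtraction on X. Then the morphisms a := s ∘ (π₁, s ∘ (0, π₂)) : X × X → X and i := s ∘ (0, 1_X) : X → X make X an internal abelian group with unit 0 : terminal → X, addition a, and inverse i; in particular a is associative, commutative, has 0 as two-sided unit, and a ∘ (1_X, i) = 0. -/
/-!
Write `x - y` for `prod.lift x y ≫ s`. Normal projections say that a map `A ⨯ B ⟶ T` vanishing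
on `A ⨯ 0` factors through the second projection. Applied to `(x, y) ↦ x - (x - y)` this gives
`x - (x - y) = 0 - (0 - y)`, whence `0 - (0 - y) = y` and `x - y = 0 → x = y`. Consequently two
maps `A ⨯ B ⟶ X` that agree on both axes are equal, and each group law is an equation between
two such maps that reduces on the axes to the unit laws `x + 0 = x = 0 + x`.
-/

open CategoryTheory Limits

def HasNormalProjections (C : Type*) [Category C] [HasZeroMorphisms C] [HasBinaryProducts C] :
    Prop :=
  ∀ A B : C, IsCokernelOf (prod.lift (𝟙 A) (0 : A ⟶ B)) (prod.snd : A ⨯ B ⟶ B)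

section

variable {C : Type*} [Category C] [HasZeroMorphisms C] [HasBinaryProducts C]

attribute [local simp] prod.lift_fst prod.lift_snd prod.lift_fst_assoc prod.lift_snd_assoc
  prod.comp_lift_assoc

lemma HasNormalProjections.lift_comp_eq_lift_zero_comp (H : HasNormalProjections C)
    {A B T : C} {h : A ⨯ B ⟶ T} (hh : prod.lift (𝟙 A) (0 : A ⟶ B) ≫ h = 0)
    {U : C} (u : U ⟶ A) (v : U ⟶ B) :
    prod.lift u v ≫ h = prod.lift 0 v ≫ h := by
  obtain ⟨k, rfl, -⟩ := (H A B).2 h hh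
  simp

structure IsSubtraction {X : C} (s : X ⨯ X ⟶ X) : Prop where
  lift_id_id_comp : prod.lift (𝟙 X) (𝟙 X) ≫ s = 0
  lift_id_zero_comp : prod.lift (𝟙 X) (0 : X ⟶ X) ≫ s = 𝟙 X

noncomputable def addOfSub {X : C} (s : X ⨯ X ⟶ X) : X ⨯ X ⟶ X :=
  prod.lift prod.fst (prod.lift 0 prod.snd ≫ s) ≫ s

lemma lift_comp_addOfSub {X U : C} (s : X ⨯ X ⟶ X) (u v : U ⟶ X) :
    prod.lift u v ≫ addOfSub s = prod.lift u (prod.lift 0 v ≫ s) ≫ s := by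
  simp [addOfSub]

namespace IsSubtraction

variable {X : C} {s : X ⨯ X ⟶ X}

lemma sub_self (hs : IsSubtraction s) {U : C} (u : U ⟶ X) : prod.lift u u ≫ s = 0 := by
  simpa using u ≫= hs.lift_id_id_comp

lemma sub_zero (hs : IsSubtraction s) {U : C} (u : U ⟶ X) : prod.lift u 0 ≫ s = u := by
  simpa using u ≫= hs.lift_id_zero_comp

/-- The left side vanishes at `(u, v) = (1, 0)`, so normal projections make it free of `u`. -/
lemma sub_sub_eq_zero_sub_zero_sub (H : HasNormalProjections C) (hs : IsSubtraction s) {U : C}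
    (u v : U ⟶ X) :
    prod.lift u (prod.lift u v ≫ s) ≫ s = prod.lift 0 (prod.lift 0 v ≫ s) ≫ s := by
  have hh : prod.lift (𝟙 X) 0 ≫ prod.lift prod.fst s ≫ s = 0 := by
    simp [hs.lift_id_zero_comp, hs.lift_id_id_comp]
  simpa using H.lift_comp_eq_lift_zero_comp hh u v

lemma zero_sub_zero_sub (H : HasNormalProjections C) (hs : IsSubtraction s) {U : C}
    (u : U ⟶ X) :
    prod.lift 0 (prod.lift 0 u ≫ s) ≫ s = u := by
  rw [← hs.sub_sub_eq_zero_sub_zero_sub H u u, hs.sub_self, hs.sub_zero]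

lemma eq_of_sub_eq_zero (H : HasNormalProjections C) (hs : IsSubtraction s) {U : C}
    {u v : U ⟶ X} (h : prod.lift u v ≫ s = 0) : u = v := by
  simpa [h, hs.sub_zero, hs.zero_sub_zero_sub H] using hs.sub_sub_eq_zero_sub_zero_sub H u v

/-- The difference of `f` and `g` factors through `prod.snd` and vanishes on the second axis. -/
lemma hom_ext (H : HasNormalProjections C) (hs : IsSubtraction s) {A B : C} {f g : A ⨯ B ⟶ X}
    (h₁ : prod.lift (𝟙 A) 0 ≫ f = prod.lift (𝟙 A) 0 ≫ g)
    (h₂ : prod.lift 0 (𝟙 B) ≫ f = prod.lift 0 (𝟙 B) ≫ g) : f = g := by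
  refine hs.eq_of_sub_eq_zero H ?_
  have hh : prod.lift (𝟙 A) (0 : A ⟶ B) ≫ prod.lift f g ≫ s = 0 := by
    simp [h₁, hs.sub_self]
  have h₂' : prod.lift 0 (𝟙 B) ≫ prod.lift f g ≫ s = 0 := by
    simp [h₂, hs.sub_self]
  calc prod.lift f g ≫ s = prod.lift 0 prod.snd ≫ prod.lift f g ≫ s := by
        simpa using H.lift_comp_eq_lift_zero_comp hh prod.fst prod.snd
    _ = 0 := by
        rw [show prod.lift (0 : A ⨯ B ⟶ A) prod.snd = prod.snd ≫ prod.lift 0 (𝟙 B) by simp,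
          Category.assoc, h₂', comp_zero]

lemma add_zero (hs : IsSubtraction s) {U : C} (u : U ⟶ X) :
    prod.lift u 0 ≫ addOfSub s = u := by
  rw [lift_comp_addOfSub, hs.sub_self, hs.sub_zero]

lemma zero_add (H : HasNormalProjections C) (hs : IsSubtraction s) {U : C}
    (u : U ⟶ X) : prod.lift 0 u ≫ addOfSub s = u := by
  rw [lift_comp_addOfSub, hs.zero_sub_zero_sub H]

lemma add_comm (H : HasNormalProjections C) (hs : IsSubtraction s) {U : C}
    (u v : U ⟶ X) : prod.lift u v ≫ addOfSub s = prod.lift v u ≫ addOfSub s := by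
  have : (prod.braiding X X).hom ≫ addOfSub s = addOfSub s := by
    apply hs.hom_ext H <;> simp [hs.add_zero, hs.zero_add H]
  simpa using prod.lift u v ≫= this.symm

lemma add_assoc (H : HasNormalProjections C) (hs : IsSubtraction s) {U : C}
    (u v w : U ⟶ X) :
    prod.lift (prod.lift u v ≫ addOfSub s) w ≫ addOfSub s =
      prod.lift u (prod.lift v w ≫ addOfSub s) ≫ addOfSub s := by
  have : prod.map (addOfSub s) (𝟙 X) ≫ addOfSub s =
      (prod.associator X X X).hom ≫ prod.map (𝟙 X) (addOfSub s) ≫ addOfSub s := by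
    apply hs.hom_ext H <;> simp [hs.add_zero, hs.zero_add H]
  simpa using prod.lift (prod.lift u v) w ≫= this

lemma add_neg_cancel (H : HasNormalProjections C) (hs : IsSubtraction s) :
    prod.lift (𝟙 X) (prod.lift 0 (𝟙 X) ≫ s) ≫ addOfSub s = 0 := by
  rw [lift_comp_addOfSub, hs.zero_sub_zero_sub H, hs.lift_id_id_comp]

end IsSubtraction

end

theorem stmt11_general {C : Type*} [Category C] [HasZeroMorphisms C]
    [HasBinaryProducts C]
    (H : ∀ A B : C, IsCokernelOf (prod.lift (𝟙 A) (0 : A ⟶ B)) (prod.snd : A ⨯ B ⟶ B))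
    {X : C} (s : X ⨯ X ⟶ X)
    (hs1 : prod.lift (𝟙 X) (𝟙 X) ≫ s = 0)
    (hs2 : prod.lift (𝟙 X) (0 : X ⟶ X) ≫ s = 𝟙 X)
    (a : X ⨯ X ⟶ X)
    (ha : a = prod.lift prod.fst (prod.lift (0 : X ⨯ X ⟶ X) prod.snd ≫ s) ≫ s)
    (i : X ⟶ X)
    (hi : i = prod.lift (0 : X ⟶ X) (𝟙 X) ≫ s) :
    (∀ ⦃U : C⦄ (u v w : U ⟶ X),
        prod.lift (prod.lift u v ≫ a) w ≫ a = prod.lift u (prod.lift v w ≫ a) ≫ a) ∧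
    (∀ ⦃U : C⦄ (u v : U ⟶ X), prod.lift u v ≫ a = prod.lift v u ≫ a) ∧
    (∀ ⦃U : C⦄ (u : U ⟶ X), prod.lift u (0 : U ⟶ X) ≫ a = u) ∧
    (∀ ⦃U : C⦄ (u : U ⟶ X), prod.lift (0 : U ⟶ X) u ≫ a = u) ∧
    prod.lift (𝟙 X) i ≫ a = 0 := by
  have hs : IsSubtraction s := ⟨hs1, hs2⟩
  obtain rfl : a = addOfSub s := ha
  subst hi
  exact ⟨fun _ => hs.add_assoc H, fun _ => hs.add_comm H,
    fun _ => hs.add_zero, fun _ => hs.zero_add H,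
    hs.add_neg_cancel H⟩

/-- In a pointed category with binary products having normal projections, a
subtraction `s` on `X` yields an internal abelian group structure on `X`, with
addition `a = s ∘ (π₁, s ∘ (0, π₂))`, inverse `i = s ∘ (0, 1_X)` and unit `0`:
`a` is associative, commutative, has `0` as a two-sided unit, and `a ∘ (1_X, i) = 0`. -/
theorem stmt11 {C : Type*} [Category C] [HasZeroObject C] [HasZeroMorphisms C]
    [HasBinaryProducts C]
    (H : ∀ A B : C, IsCokernelOf (prod.lift (𝟙 A) (0 : A ⟶ B)) (prod.snd : A ⨯ B ⟶ B))
    {X : C} (s : X ⨯ X ⟶ X)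
    (hs1 : prod.lift (𝟙 X) (𝟙 X) ≫ s = 0)
    (hs2 : prod.lift (𝟙 X) (0 : X ⟶ X) ≫ s = 𝟙 X)
    (a : X ⨯ X ⟶ X)
    (ha : a = prod.lift prod.fst (prod.lift (0 : X ⨯ X ⟶ X) prod.snd ≫ s) ≫ s)
    (i : X ⟶ X)
    (hi : i = prod.lift (0 : X ⟶ X) (𝟙 X) ≫ s) :
    (∀ ⦃U : C⦄ (u v w : U ⟶ X),
        prod.lift (prod.lift u v ≫ a) w ≫ a = prod.lift u (prod.lift v w ≫ a) ≫ a) ∧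
    (∀ ⦃U : C⦄ (u v : U ⟶ X), prod.lift u v ≫ a = prod.lift v u ≫ a) ∧
    (∀ ⦃U : C⦄ (u : U ⟶ X), prod.lift u (0 : U ⟶ X) ≫ a = u) ∧
    (∀ ⦃U : C⦄ (u : U ⟶ X), prod.lift (0 : U ⟶ X) u ≫ a = u) ∧
    prod.lift (𝟙 X) i ≫ a = 0 :=
  stmt11_general H s hs1 hs2 a ha i hi
end

section
/- Let C be a pointed category with binary products in which the 'centralic' law holds: for all f : A × B → C' and generalized elements x, y : U → A, z : U → B, if f ∘ (x, 0) = f ∘ (y, 0) then f ∘ (x, z) = f ∘ (y, z). Then C has normal projections: for all f : A × B → C', a : U → A, b : U → B, f ∘ (a, 0) = 0 implies f ∘ (a, b) = f ∘ (0, b). -/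
open CategoryTheory Limits

theorem stmt12_general {C : Type*} [Category C] [HasZeroMorphisms C]
    [HasBinaryProducts C]
    (H : ∀ ⦃A B C' U : C⦄ (f : A ⨯ B ⟶ C') (x y : U ⟶ A) (z : U ⟶ B),
      prod.lift x (0 : U ⟶ B) ≫ f = prod.lift y (0 : U ⟶ B) ≫ f →
        prod.lift x z ≫ f = prod.lift y z ≫ f) :
    ∀ ⦃A B C' U : C⦄ (f : A ⨯ B ⟶ C') (a : U ⟶ A) (b : U ⟶ B),
      prod.lift a (0 : U ⟶ B) ≫ f = 0 →
        prod.lift a b ≫ f = prod.lift (0 : U ⟶ A) b ≫ f := by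
  intro A B C' U f a b h
  apply H
  have lift_zero_zero : prod.lift (0 : U ⟶ A) (0 : U ⟶ B) = 0 := by
    ext <;> simp only [prod.lift_fst, prod.lift_snd, zero_comp]
  rw [h, lift_zero_zero, zero_comp]

/-- A pointed category with binary products satisfying the centralic law
(`f ∘ (x,0) = f ∘ (y,0)` implies `f ∘ (x,z) = f ∘ (y,z)`) has normal projections
(in the elementwise form: `f ∘ (a,0) = 0` implies `f ∘ (a,b) = f ∘ (0,b)`). -/
theorem stmt12 {C : Type*} [Category C] [HasZeroObject C] [HasZeroMorphisms C]
    [HasBinaryProducts C]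
    (H : ∀ ⦃A B C' U : C⦄ (f : A ⨯ B ⟶ C') (x y : U ⟶ A) (z : U ⟶ B),
      prod.lift x (0 : U ⟶ B) ≫ f = prod.lift y (0 : U ⟶ B) ≫ f →
        prod.lift x z ≫ f = prod.lift y z ≫ f) :
    ∀ ⦃A B C' U : C⦄ (f : A ⨯ B ⟶ C') (a : U ⟶ A) (b : U ⟶ B),
      prod.lift a (0 : U ⟶ B) ≫ f = 0 →
        prod.lift a b ≫ f = prod.lift (0 : U ⟶ A) b ≫ f :=
  stmt12_general H
end
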